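/- Let D : ℝⁿ → ℝ and g₁ : ℝ → ℝ be differentiable, and let c ∈ ℝ be a constant with g₁(D(x)) − c > 0 in a neighborhood of x. Define δ(x) = −ε∇_x |g₁(D(x)) − c|. Then the first-order expansion of the adversarially perturbed objective satisfies g₁(D(x)) + ∇_x g₁(D(x)) · δ(x) = g₁(D(x)) − ε (g₁'(D(x)))² ‖∇_x D(x)‖², i.e., adversarial training adds a gradient penalty −ε(g₁')²‖∇D‖². -/

import Mathlib

open Filter

section Gradient

variable {F : Type*} [NormedAddCommGroup F] [InnerProductSpace ℝ F] [CompleteSpace F]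
  {f : F → ℝ} {f' x : F}

theorem HasDerivAt.comp_hasGradientAt {g : ℝ → ℝ} {g' : ℝ} (hg : HasDerivAt g g' (f x))
    (hf : HasGradientAt f f' x) : HasGradientAt (fun y => g (f y)) (g' • f') x := by
  rw [hasGradientAt_iff_hasFDerivAt, map_smul]
  exact hg.comp_hasFDerivAt x hf.hasFDerivAt

theorem HasGradientAt.sub_const (hf : HasGradientAt f f' x) (c : ℝ) :
    HasGradientAt (fun y => f y - c) f' x := by
  rw [hasGradientAt_iff_hasFDerivAt] at hf ⊢
  exact hf.sub_const c

theorem HasGradientAt.abs_of_eventually_pos (hf : HasGradientAt f f' x)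
    (hpos : ∀ᶠ y in nhds x, 0 < f y) : HasGradientAt (fun y => |f y|) f' x :=
  hf.congr_of_eventuallyEq (hpos.mono fun _ hy => abs_of_pos hy)

end Gradient

theorem inner_smul_neg_smul_self {F : Type*} [NormedAddCommGroup F] [InnerProductSpace ℝ F]
    (a ε : ℝ) (v : F) : inner ℝ (a • v) (-ε • a • v) = -(ε * a ^ 2 * ‖v‖ ^ 2) := by
  rw [real_inner_smul_right, real_inner_self_eq_norm_sq, norm_smul, Real.norm_eq_abs, mul_pow,
    sq_abs]
  ring

theorem stmt_9_general {n : ℕ} (D : EuclideanSpace ℝ (Fin n) → ℝ) (g₁ : ℝ → ℝ)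
    (hD : Differentiable ℝ D) (hg₁ : Differentiable ℝ g₁)
    (c ε : ℝ) (x : EuclideanSpace ℝ (Fin n))
    (hpos : ∀ᶠ y in nhds x, 0 < g₁ (D y) - c)
    (δ : EuclideanSpace ℝ (Fin n))
    (hδ : δ = -ε • gradient (fun y => |g₁ (D y) - c|) x) :
    g₁ (D x) + (inner ℝ (gradient (fun y => g₁ (D y)) x) δ : ℝ)
      = g₁ (D x) - ε * (deriv g₁ (D x)) ^ 2 * ‖gradient D x‖ ^ 2 := by
  have hcomp : HasGradientAt (fun y => g₁ (D y)) (deriv g₁ (D x) • gradient D x) x :=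
    (hg₁ (D x)).hasDerivAt.comp_hasGradientAt (hD x).hasGradientAt
  have habs : HasGradientAt (fun y => |g₁ (D y) - c|) (deriv g₁ (D x) • gradient D x) x :=
    (hcomp.sub_const c).abs_of_eventually_pos hpos
  rw [hδ, hcomp.gradient, habs.gradient, inner_smul_neg_smul_self, sub_eq_add_neg]

/-- When `g₁(D(x)) − c > 0` near `x`, the DAT perturbation
`δ(x) = −ε ∇ₓ |g₁(D(x)) − c|` turns the first-order expansion of the perturbed
objective into a 0-centered gradient penalty:
`g₁(D(x)) + ∇ₓ g₁(D(x)) · δ(x) = g₁(D(x)) − ε (g₁'(D(x)))² ‖∇ₓ D(x)‖²`. -/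
theorem stmt_9 {n : ℕ} (D : EuclideanSpace ℝ (Fin n) → ℝ) (g₁ : ℝ → ℝ)
    (hD : Differentiable ℝ D) (hg₁ : Differentiable ℝ g₁)
    (c ε : ℝ) (hε : 0 < ε) (x : EuclideanSpace ℝ (Fin n))
    (hpos : ∀ᶠ y in nhds x, 0 < g₁ (D y) - c)
    (δ : EuclideanSpace ℝ (Fin n))
    (hδ : δ = -ε • gradient (fun y => |g₁ (D y) - c|) x) :
    g₁ (D x) + (inner ℝ (gradient (fun y => g₁ (D y)) x) δ : ℝ)
      = g₁ (D x) - ε * (deriv g₁ (D x)) ^ 2 * ‖gradient D x‖ ^ 2 :=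
  stmt_9_general D g₁ hD hg₁ c ε x hpos δ hδ
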